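/- arXiv:1910.06206 — 5 statements merged into one kernel-verified Lean document; each statement's English description precedes it below -/
import Mathlib

section
/- In any tiling of the D-dimensional unit hypercube by more than one axis-aligned subhypercube, each of the 2^D corners of the unit hypercube lies in a distinct tile; consequently any nontrivial tiling uses at least 2^D tiles. -/
/-!
If two corners of `[0,L]^D` lie in one tile, they differ in some coordinate `d`, so the tile
spans the whole segment `[0,L]` in direction `d`; being a cube inside `[0,L]^D`, it is then all of
`[0,L]^D`. Any other tile has nonempty interior inside that of `[0,L]^D`, contradicting
disjointness of interiors.
-/

noncomputable section

def Cube {D t : ℕ} (c : Fin t → Fin D → ℝ) (s : Fin t → ℝ) (i : Fin t) :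
    Set (Fin D → ℝ) :=
  Set.Icc (c i) (fun d => c i d + s i)

/-- `IsTiling D t L c s` : the `t` axis-aligned closed hypercubes with corners `c i` and
side lengths `s i` have pairwise disjoint interiors and union the cube `[0,L]^D`. -/
def IsTiling (D t : ℕ) (L : ℝ) (c : Fin t → Fin D → ℝ) (s : Fin t → ℝ) : Prop :=
  (∀ i, 0 < s i) ∧
  (∀ i j, i ≠ j → Disjoint (interior (Cube c s i)) (interior (Cube c s j))) ∧
  (⋃ i, Cube c s i) = Set.Icc (0 : Fin D → ℝ) (fun _ => L)

/-- `t` is `D`-admissible: the unit hypercube can be tiled by exactly `t` subcubes. -/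
def Admissible (D t : ℕ) : Prop := ∃ c s, IsTiling D t 1 c s

open Set

def corner {D : ℕ} (L : ℝ) (ε : Fin D → Bool) : Fin D → ℝ :=
  fun d => if ε d then L else 0

lemma corner_mem_Icc {D : ℕ} {L : ℝ} (hL : 0 ≤ L) (ε : Fin D → Bool) :
    corner L ε ∈ Icc (0 : Fin D → ℝ) (fun _ => L) :=
  ⟨fun d => by unfold corner; split <;> simp [hL],
    fun d => by unfold corner; split <;> simp [hL]⟩

section

variable {D t : ℕ} {c : Fin t → Fin D → ℝ} {s : Fin t → ℝ}

lemma interior_cube_nonempty {i : Fin t} (hs : 0 < s i) : (interior (Cube c s i)).Nonempty :=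
  ⟨fun d => c i d + s i / 2, mem_interior_iff_mem_nhds.2 <|
    pi_Icc_mem_nhds (fun _ => by linarith) (fun _ => by linarith)⟩

namespace IsTiling

variable {L : ℝ}

lemma cube_subset (h : IsTiling D t L c s) (i : Fin t) : Cube c s i ⊆ Icc 0 (fun _ => L) :=
  h.2.2 ▸ subset_iUnion (Cube c s) i

lemma origin_nonneg (h : IsTiling D t L c s) (i : Fin t) (d : Fin D) : 0 ≤ c i d :=
  (h.cube_subset i ⟨le_rfl, fun _ => le_add_of_nonneg_right (h.1 i).le⟩).1 d

lemma origin_add_side_le (h : IsTiling D t L c s) (i : Fin t) (d : Fin D) : c i d + s i ≤ L :=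
  (h.cube_subset i ⟨fun _ => le_add_of_nonneg_right (h.1 i).le, le_rfl⟩).2 d

lemma exists_mem_cube (h : IsTiling D t L c s) {x : Fin D → ℝ}
    (hx : x ∈ Icc 0 (fun _ => L)) : ∃ i, x ∈ Cube c s i :=
  mem_iUnion.1 (h.2.2 ▸ hx)

lemma cube_ne_Icc (h : IsTiling D t L c s) (ht : 1 < t) (i : Fin t) :
    Cube c s i ≠ Icc 0 (fun _ => L) := by
  intro hi
  obtain ⟨j, hji⟩ := Fintype.exists_ne_of_one_lt_card (by simpa using ht) i
  obtain ⟨x, hx⟩ := interior_cube_nonempty (c := c) (h.1 j)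
  have hxi : x ∈ interior (Cube c s i) := hi ▸ interior_mono (h.cube_subset j) hx
  exact (h.2.1 i j hji.symm).ne_of_mem hxi hx rfl

lemma cube_eq_Icc_of_corner_mem (h : IsTiling D t L c s) {i : Fin t} {ε ε' : Fin D → Bool}
    (hne : ε ≠ ε') (hε : corner L ε ∈ Cube c s i) (hε' : corner L ε' ∈ Cube c s i) :
    Cube c s i = Icc 0 (fun _ => L) := by
  obtain ⟨d, hd⟩ := Function.ne_iff.1 hne
  have hspan : c i d ≤ 0 ∧ L ≤ c i d + s i := by
    have h₁ := hε.1 d; have h₂ := hε.2 d; have h₃ := hε'.1 d; have h₄ := hε'.2 d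
    simp only [corner] at h₁ h₂ h₃ h₄
    split_ifs at h₁ h₂ h₃ h₄ <;> simp_all
  have hside : s i = L := by
    linarith [h.origin_nonneg i d, h.origin_add_side_le i d]
  have hzero : c i = 0 := funext fun d' => by
    rw [Pi.zero_apply]
    linarith [h.origin_nonneg i d', h.origin_add_side_le i d']
  simp [Cube, hzero, hside]

end IsTiling

end

theorem stmt2 (D t : ℕ) (c : Fin t → Fin D → ℝ) (s : Fin t → ℝ)
    (h : IsTiling D t 1 c s) (ht : 1 < t) :
    (∃ f : (Fin D → Bool) → Fin t, Function.Injective f ∧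
      ∀ ε : Fin D → Bool, (fun d => if ε d then (1 : ℝ) else 0) ∈ Cube c s (f ε)) ∧
    2 ^ D ≤ t := by
  choose f hf using fun ε => h.exists_mem_cube (corner_mem_Icc zero_le_one ε)
  have hinj : Function.Injective f := fun ε ε' hff => by_contra fun hne =>
    h.cube_ne_Icc ht (f ε) <| h.cube_eq_Icc_of_corner_mem hne (hf ε) (hff ▸ hf ε')
  refine ⟨⟨f, hinj, hf⟩, ?_⟩
  simpa using Fintype.card_le_of_injective f hinj
end
end

section
/- For every D ≥ 1 there exists an integer A_D such that every integer t > A_D is D-admissible, i.e., the unit D-hypercube can be tiled by exactly t axis-aligned hypercubes. In fact one may take A_D = 2^{D^2+D}. -/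
noncomputable section

/-! The grid of side `1 / k` tiles the unit cube by `k ^ D` cubes, and replacing one cube of a
tiling by a scaled copy of a tiling with `s` cubes adds `s - 1` cubes. Starting from the trivial
tiling, every `1 + a (2 ^ D - 1) + b (m ^ D - 1)` with `m = 2 ^ D - 1` is therefore admissible.
As `m ∣ m ^ D`, the number `m ^ D - 1` is `-1` modulo `m`, so every `n ≥ (m - 1) (m ^ D - 1)` has
the form `a m + b (m ^ D - 1)`; and `(m - 1) (m ^ D - 1) < 2 ^ (D ^ 2 + D)`. -/

open Set Function

def IsDissection {X ι : Type*} [TopologicalSpace X] (K : ι → Set X) (S : Set X) : Prop :=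
  Pairwise (Disjoint on fun i => interior (K i)) ∧ ⋃ i, K i = S

namespace IsDissection

variable {X Y ι κ : Type*} [TopologicalSpace X] [TopologicalSpace Y] {K : ι → Set X} {S : Set X}

theorem comp_equiv (h : IsDissection K S) (e : κ ≃ ι) : IsDissection (K ∘ e) S :=
  ⟨fun _ _ hij => h.1 (e.injective.ne hij), by rw [← h.2]; exact e.surjective.iUnion_comp K⟩

theorem preimage (h : IsDissection K S) (φ : Y ≃ₜ X) :
    IsDissection (fun i => φ ⁻¹' K i) (φ ⁻¹' S) := by
  refine ⟨fun i j hij => ?_, by rw [← preimage_iUnion, h.2]⟩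
  simp only [onFun, ← φ.preimage_interior]
  exact (h.1 hij).preimage φ

theorem sumElim {K : Option ι → Set X} (h : IsDissection K S) {L : κ → Set X}
    (hL : IsDissection L (K none)) : IsDissection (Sum.elim (K ∘ some) L) S := by
  have hsub : ∀ j, interior (L j) ⊆ interior (K none) :=
    fun j => interior_mono (hL.2 ▸ subset_iUnion L j)
  refine ⟨?_, ?_⟩
  · rintro (i | j) (i' | j') hne
    · exact h.1 (by simpa using hne)
    · exact (h.1 (Option.some_ne_none i)).mono_right (hsub j')
    · exact (h.1 (Option.some_ne_none i').symm).mono_left (hsub j)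
    · exact hL.1 (by simpa using hne)
  · rw [iUnion_sumElim, hL.2, union_comm, ← h.2, iUnion_option]; rfl

theorem pi {n : Type*} [Finite n] {X : n → Type*} [∀ d, TopologicalSpace (X d)] {ι : n → Type*}
    {K : ∀ d, ι d → Set (X d)} {S : ∀ d, Set (X d)} (h : ∀ d, IsDissection (K d) (S d)) :
    IsDissection (fun v : ∀ d, ι d => univ.pi fun d => K d (v d)) (univ.pi S) := by
  refine ⟨fun v w hvw => ?_, ?_⟩
  · obtain ⟨d, hd⟩ := ne_iff.mp hvw
    simp only [onFun, interior_pi_set finite_univ]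
    exact disjoint_univ_pi.mpr ⟨d, (h d).1 hd⟩
  · rw [iUnion_univ_pi]
    exact congrArg _ (funext fun d => (h d).2)

end IsDissection

def cube {n : Type*} (x : n → ℝ) (r : ℝ) : Set (n → ℝ) := Icc x (x + const n r)

def IsCubeTiling {n ι : Type*} (x : ι → n → ℝ) (r : ι → ℝ) (S : Set (n → ℝ)) : Prop :=
  (∀ i, 0 < r i) ∧ IsDissection (fun i => cube (x i) (r i)) S

section Cubes

variable {n ι κ : Type*}

theorem cube_eq_pi (x : n → ℝ) (r : ℝ) : cube x r = univ.pi fun d => Icc (x d) (x d + r) :=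
  (pi_univ_Icc _ _).symm

theorem cube_zero (r : ℝ) : cube (0 : n → ℝ) r = Icc 0 (const n r) := by
  rw [cube, zero_add]

theorem preimage_affine_cube (a x : n → ℝ) {l : ℝ} (hl : 0 < l) (r : ℝ) :
    (fun z => l⁻¹ • (-a + z)) ⁻¹' cube x r = cube (a + l • x) (l * r) := by
  ext z
  rw [cube, cube, mem_preimage, mem_Icc, mem_Icc, le_inv_smul_iff_of_pos hl,
    inv_smul_le_iff_of_pos hl, le_neg_add_iff_add_le, neg_add_le_iff_le_add, smul_add, ← add_assoc]
  rfl

theorem IsCubeTiling.comp_equiv {x : ι → n → ℝ} {r : ι → ℝ} {S : Set (n → ℝ)}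
    (h : IsCubeTiling x r S) (e : κ ≃ ι) : IsCubeTiling (x ∘ e) (r ∘ e) S :=
  ⟨fun i => h.1 (e i), h.2.comp_equiv e⟩

theorem IsCubeTiling.affine {x : ι → n → ℝ} {r : ι → ℝ} {b : n → ℝ} {q : ℝ}
    (h : IsCubeTiling x r (cube b q)) (a : n → ℝ) {l : ℝ} (hl : 0 < l) :
    IsCubeTiling (fun i => a + l • x i) (fun i => l * r i) (cube (a + l • b) (l * q)) := by
  let φ : (n → ℝ) ≃ₜ (n → ℝ) :=
    (Homeomorph.addLeft (-a)).trans (Homeomorph.smulOfNeZero l⁻¹ (inv_ne_zero hl.ne'))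
  have hφ : ∀ y s, φ ⁻¹' cube y s = cube (a + l • y) (l * s) := fun y => preimage_affine_cube a y hl
  exact ⟨fun i => mul_pos hl (h.1 i), by simpa only [hφ] using h.2.preimage φ⟩

theorem IsCubeTiling.refine {x : Option ι → n → ℝ} {r : Option ι → ℝ} {S : Set (n → ℝ)}
    (h : IsCubeTiling x r S) {x' : κ → n → ℝ} {r' : κ → ℝ} (h' : IsCubeTiling x' r' (cube 0 1)) :
    IsCubeTiling (Sum.elim (x ∘ some) fun j => x none + r none • x' j)
      (Sum.elim (r ∘ some) fun j => r none * r' j) S := by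
  have hs := h'.affine (x none) (h.1 none)
  rw [smul_zero, add_zero, mul_one] at hs
  refine ⟨fun p => ?_, ?_⟩
  · cases p with
    | inl i => exact h.1 (some i)
    | inr j => exact hs.1 j
  · convert h.2.sumElim hs.2 using 1
    ext (i | j) : 1 <;> rfl

end Cubes

theorem isDissection_Icc_div (k : ℕ) (hk : 0 < k) :
    IsDissection (fun j : Fin k => Icc ((j : ℝ) / k) (j / k + 1 / k)) (Icc 0 1) := by
  have hk' : (0 : ℝ) < k := Nat.cast_pos.2 hk
  have hf : Monotone fun j : ℕ => (j : ℝ) / k :=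
    fun _ _ hij => div_le_div_of_nonneg_right (Nat.cast_le.2 hij) hk'.le
  have hsucc : ∀ j : ℕ, (j : ℝ) / k + 1 / k = ((j + 1 : ℕ) : ℝ) / k := fun j => by
    push_cast; ring
  simp only [hsucc]
  refine ⟨fun i j hij => ?_, subset_antisymm ?_ fun z hz => ?_⟩
  · simpa only [onFun, interior_Icc, Order.succ_eq_add_one] using
      hf.pairwise_disjoint_on_Ioo_succ (Fin.val_injective.ne hij)
  · refine iUnion_subset fun j => Icc_subset_Icc (by positivity) ?_
    rw [div_le_one hk']
    exact_mod_cast j.isLt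
  · rcases hz.1.eq_or_lt with rfl | hz0
    · exact mem_iUnion.2 ⟨⟨0, hk⟩, by simp [hk'.le]⟩
    · have hz' : z ∈ Ioc (((0 : ℕ) : ℝ) / k) ((k : ℕ) / k) := by
        simpa [hk'.ne'] using And.intro hz0 hz.2
      rw [← hf.biUnion_Ico_Ioc_map_succ] at hz'
      obtain ⟨j, hj, hzj⟩ := mem_iUnion₂.1 hz'
      exact mem_iUnion.2 ⟨⟨j, hj.2⟩, Ioc_subset_Icc_self (by simpa using hzj)⟩

theorem isCubeTiling_grid (n : Type*) [Finite n] (k : ℕ) (hk : 0 < k) :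
    IsCubeTiling (fun v : n → Fin k => fun d => (v d : ℝ) / k) (fun _ => 1 / k) (cube 0 1) := by
  refine ⟨fun _ => by positivity, ?_⟩
  simpa only [cube_eq_pi, Pi.zero_apply, zero_add] using
    IsDissection.pi fun _ : n => isDissection_Icc_div k hk

theorem admissible_iff {D t : ℕ} :
    Admissible D t ↔ ∃ (x : Fin t → Fin D → ℝ) (r : Fin t → ℝ), IsCubeTiling x r (cube 0 1) := by
  rw [cube_zero]
  rfl

theorem IsCubeTiling.admissible {D : ℕ} {ι : Type*} [Fintype ι] {x : ι → Fin D → ℝ} {r : ι → ℝ}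
    (h : IsCubeTiling x r (cube 0 1)) : Admissible D (Fintype.card ι) :=
  admissible_iff.2 ⟨_, _, h.comp_equiv (Fintype.equivFin ι).symm⟩

theorem admissible_pow (D : ℕ) {k : ℕ} (hk : 0 < k) : Admissible D (k ^ D) := by
  simpa using (isCubeTiling_grid (Fin D) k hk).admissible

theorem Admissible.add_succ {D a b : ℕ} (ha : Admissible D (a + 1)) (hb : Admissible D (b + 1)) :
    Admissible D (a + b + 1) := by
  obtain ⟨x, r, h⟩ := admissible_iff.1 ha
  obtain ⟨x', r', h'⟩ := admissible_iff.1 hb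
  simpa [add_assoc] using ((h.comp_equiv (finSuccEquiv a).symm).refine h').admissible

theorem Admissible.add_mul_succ {D a b : ℕ} (ha : Admissible D (a + 1))
    (hb : Admissible D (b + 1)) (k : ℕ) : Admissible D (a + k * b + 1) := by
  induction k with
  | zero => simpa using ha
  | succ k ih => simpa [add_mul, add_assoc] using ih.add_succ hb

theorem Nat.exists_eq_mul_add_mul_of_dvd_add_one {m N n : ℕ} (hm : 0 < m) (hN : m ∣ N + 1)
    (hn : (m - 1) * N ≤ n) : ∃ a b, n = a * m + b * N := by
  set b := n * (m - 1) % m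
  have hbN : b * N ≤ n := (Nat.mul_le_mul_right N (Nat.le_pred_of_lt (Nat.mod_lt _ hm))).trans hn
  -- in `ZMod m` both `N` and `m - 1` are `-1`, so `b * N = n * (m - 1) * N = n`
  have hdvd : m ∣ n - b * N := by
    have hN' : (N : ZMod m) = -1 :=
      eq_neg_of_add_eq_zero_left (by exact_mod_cast (ZMod.natCast_eq_zero_iff _ _).2 hN)
    have hm' : ((m - 1 : ℕ) : ZMod m) = -1 := by
      rw [Nat.cast_sub hm, ZMod.natCast_self, Nat.cast_one, zero_sub]
    rw [← ZMod.natCast_eq_zero_iff, Nat.cast_sub hbN, Nat.cast_mul, ZMod.natCast_mod,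
      Nat.cast_mul, hN', hm']
    ring
  obtain ⟨a, ha⟩ := hdvd
  exact ⟨a, b, by rw [mul_comm a, ← ha, Nat.sub_add_cancel hbN]⟩

theorem stmt9 (D : ℕ) (hD : 1 ≤ D) :
    (∃ A : ℕ, ∀ t : ℕ, A < t → Admissible D t) ∧
    (∀ t : ℕ, 2 ^ (D ^ 2 + D) < t → Admissible D t) := by
  suffices h : ∀ t : ℕ, 2 ^ (D ^ 2 + D) < t → Admissible D t from ⟨⟨_, h⟩, h⟩
  intro t ht
  set m := 2 ^ D - 1
  have hm : 0 < m := Nat.sub_pos_of_lt (Nat.one_lt_two_pow (by omega))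
  have hM : 0 < m ^ D := pow_pos hm D
  have hdvd : m ∣ (m ^ D - 1) + 1 := by
    rw [Nat.sub_add_cancel hM]
    exact dvd_pow_self m (by omega)
  have hbound : (m - 1) * (m ^ D - 1) ≤ t - 1 :=
    calc (m - 1) * (m ^ D - 1) ≤ 2 ^ D * (2 ^ D) ^ D :=
          Nat.mul_le_mul (by omega) ((Nat.sub_le _ _).trans (Nat.pow_le_pow_left (by omega) D))
      _ = 2 ^ (D ^ 2 + D) := by ring
      _ ≤ t - 1 := by omega
  obtain ⟨a, b, hab⟩ := Nat.exists_eq_mul_add_mul_of_dvd_add_one hm hdvd hbound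
  have h2 : Admissible D (m + 1) := by
    rw [Nat.sub_add_cancel Nat.one_le_two_pow]
    exact admissible_pow D two_pos
  have hM' : Admissible D ((m ^ D - 1) + 1) := by
    rw [Nat.sub_add_cancel hM]
    exact admissible_pow D hm
  have h1 : Admissible D (0 + 1) := by simpa using admissible_pow D one_pos
  convert (h1.add_mul_succ h2 a).add_mul_succ hM' b using 1
  rw [zero_add, ← hab, Nat.sub_add_cancel (Nat.one_le_of_lt ht)]
end
end

section
/- Let S ⊆ ℕ be closed under the operation (t,s) ↦ t+s−1, with 1 ∈ S, 2^D ∈ S, and (2^D−1)^D ∈ S. Then S contains every integer greater than 2^{D^2+D}. -/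
/-!
Shifting by one turns `(t, s) ↦ t + s - 1` into addition, so `{m | m + 1 ∈ S}` is an additive
submonoid of `ℕ`; it contains `a = 2 ^ D - 1` and `b = a ^ D - 1`, which are coprime since
`a ∣ b + 1`. Choosing `l < a` with `l * b ≡ m [MOD a]` writes every `m ≥ (a - 1) * b` as
`k * a + l * b`, and `(a - 1) * b ≤ 2 ^ D * 2 ^ (D ^ 2)`.
-/

noncomputable section

def shiftedSubmonoid (S : Set ℕ) (hclosed : ∀ t ∈ S, ∀ s ∈ S, t + s - 1 ∈ S)
    (h1 : 1 ∈ S) : AddSubmonoid ℕ where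
  carrier := {m | m + 1 ∈ S}
  zero_mem' := h1
  add_mem' {m n} hm hn := by
    have h := hclosed _ hm _ hn
    rwa [show m + 1 + (n + 1) - 1 = m + n + 1 by omega] at h

theorem Nat.exists_eq_mul_add_mul_of_coprime {a b m : ℕ} (hab : a.Coprime b) (ha : a ≠ 0)
    (hm : (a - 1) * b ≤ m) : ∃ k l, m = k * a + l * b := by
  obtain ⟨l, hla, hl⟩ := Nat.exists_mul_mod_eq_of_coprime m hab.symm ha
  have hlb : l * b ≤ m := le_trans (Nat.mul_le_mul_right b (by omega)) hm
  obtain ⟨k, hk⟩ : a ∣ m - l * b :=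
    Nat.dvd_of_mod_eq_zero (Nat.sub_mod_eq_zero_of_mod_eq (by rw [hl.symm, Nat.mul_comm]))
  exact ⟨k, l, by rw [Nat.mul_comm k, ← hk, Nat.sub_add_cancel hlb]⟩

theorem Nat.coprime_self_pow_sub_one {a D : ℕ} (ha : 0 < a) (hD : D ≠ 0) :
    a.Coprime (a ^ D - 1) := by
  have h : (a ^ D).Coprime (a ^ D - 1) :=
    (Nat.coprime_self_sub_right (Nat.one_le_pow _ _ ha)).mpr (Nat.coprime_one_right _)
  exact h.coprime_dvd_left (dvd_pow_self a hD)

theorem stmt11 (D : ℕ) (hD : 1 ≤ D) (S : Set ℕ)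
    (hclosed : ∀ t ∈ S, ∀ s ∈ S, t + s - 1 ∈ S)
    (h1 : 1 ∈ S) (h2 : 2 ^ D ∈ S) (h3 : (2 ^ D - 1) ^ D ∈ S) :
    ∀ n : ℕ, 2 ^ (D ^ 2 + D) < n → n ∈ S := by
  intro n hn
  set a := 2 ^ D - 1
  set b := a ^ D - 1
  set T := shiftedSubmonoid S hclosed h1
  have ha_pos : 0 < a := Nat.sub_pos_of_lt (Nat.one_lt_two_pow (by omega))
  have ha : a ∈ T := show a + 1 ∈ S by rwa [Nat.sub_add_cancel Nat.one_le_two_pow]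
  have hb : b ∈ T := show b + 1 ∈ S by rwa [Nat.sub_add_cancel (Nat.one_le_pow _ _ ha_pos)]
  have hbound : (a - 1) * b ≤ n - 1 := by
    have hb_le : b ≤ (2 ^ D) ^ D :=
      (Nat.sub_le _ _).trans (Nat.pow_le_pow_left (Nat.sub_le _ _) D)
    have : (a - 1) * b ≤ 2 ^ (D ^ 2 + D) := calc
      (a - 1) * b ≤ 2 ^ D * (2 ^ D) ^ D := Nat.mul_le_mul (by omega) hb_le
      _ = 2 ^ (D ^ 2 + D) := by ring
    omega
  obtain ⟨k, l, hkl⟩ := Nat.exists_eq_mul_add_mul_of_coprime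
    (Nat.coprime_self_pow_sub_one ha_pos (by omega)) ha_pos.ne' hbound
  have hmem : n - 1 + 1 ∈ S := hkl ▸ add_mem (nsmul_mem ha k) (nsmul_mem hb l)
  rwa [Nat.sub_add_cancel (Nat.one_le_of_lt hn)] at hmem
end
end

section
/- The volume identity 9^4 = 5^4 + 4^4 + 57·3^4 + 38·2^4 + 455 holds, and there is a corresponding tiling of a 9×9×9×9 hypercube by one 5-cube, one 4-cube, 57 3-cubes, 38 2-cubes, and 455 unit 4-dimensional cubes, giving a tiling of the tesseract into exactly 552 hypercubes. -/
/-!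
The cubes are laid out in eleven blocks, each a grid of equal cubes. Since all corners and sides
are integers, a family of cubes tiles `[0,9]^4` as soon as any two of them are separated along
some axis, all lie in `[0,9]^4`, and every unit lattice cell lies in one of them. For grid cubes
these conditions reduce to the same conditions on the blocks, which are finite checks; the
numbers of cubes of each size are read off the grid dimensions.
-/

noncomputable section

open Set

section Cubes

variable {D t : ℕ} (c : Fin t → Fin D → ℝ) (s : Fin t → ℝ)

lemma interior_cube (i : Fin t) :
    interior (Cube c s i) = univ.pi fun d => Ioo (c i d) (c i d + s i) := by
  rw [Cube, ← pi_univ_Icc, interior_pi_set finite_univ]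
  simp only [interior_Icc]

lemma disjoint_interior_cube_of_le {i j : Fin t} {d : Fin D} (h : c i d + s i ≤ c j d) :
    Disjoint (interior (Cube c s i)) (interior (Cube c s j)) := by
  rw [interior_cube, interior_cube, Set.disjoint_left]
  intro x hi hj
  linarith [(hi d trivial).2, (hj d trivial).1]

end Cubes

lemma exists_nat_lt_le_le_add_one {L : ℕ} (hL : 0 < L) {x : ℝ} (h0 : 0 ≤ x) (hL' : x ≤ L) :
    ∃ n : ℕ, n < L ∧ (n : ℝ) ≤ x ∧ x ≤ n + 1 := by
  rcases hL'.lt_or_eq with hx | rfl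
  · refine ⟨⌊x⌋₊, (Nat.floor_lt h0).2 hx, Nat.floor_le h0, (Nat.lt_floor_add_one x).le⟩
  · refine ⟨L - 1, by omega, ?_, ?_⟩ <;> simp [Nat.cast_sub (Nat.one_le_of_lt hL)]

theorem isTiling_of_nat {ι : Type*} {D t L : ℕ} (e : ι ≃ Fin t) (c : ι → Fin D → ℕ)
    (s : ι → ℕ) (hL : 0 < L) (hs : ∀ i, 0 < s i)
    (hsep : ∀ i j, i ≠ j → ∃ d, c i d + s i ≤ c j d ∨ c j d + s j ≤ c i d)
    (hfit : ∀ i d, c i d + s i ≤ L)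
    (hcover : ∀ v : Fin D → ℕ, (∀ d, v d < L) → ∃ i, ∀ d, c i d ≤ v d ∧ v d < c i d + s i) :
    IsTiling D t L (fun k d => c (e.symm k) d) (fun k => s (e.symm k)) := by
  refine ⟨fun k => Nat.cast_pos.2 (hs _), fun k l hkl => ?_, ?_⟩
  · obtain ⟨d, h | h⟩ := hsep (e.symm k) (e.symm l) (by simpa using hkl)
    · exact disjoint_interior_cube_of_le _ _ (d := d) (by exact_mod_cast h)
    · exact (disjoint_interior_cube_of_le _ _ (d := d) (by exact_mod_cast h)).symm
  ext x
  simp only [mem_iUnion, Cube, mem_Icc, Pi.le_def]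
  constructor
  · rintro ⟨k, hlo, hhi⟩
    refine ⟨fun d => (Nat.cast_nonneg _).trans (hlo d), fun d => (hhi d).trans ?_⟩
    exact_mod_cast hfit (e.symm k) d
  · rintro ⟨h0, hL'⟩
    choose v hvL hvx hxv using fun d => exists_nat_lt_le_le_add_one hL (h0 d) (hL' d)
    obtain ⟨i, hi⟩ := hcover v hvL
    refine ⟨e i, fun d => ?_, fun d => ?_⟩ <;> simp only [Equiv.symm_apply_apply]
    · exact (Nat.cast_le.2 (hi d).1).trans (hvx d)
    · exact (hxv d).trans (by exact_mod_cast (hi d).2)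

lemma natCard_cast_eq {ι : Type*} {t : ℕ} (e : ι ≃ Fin t) (s : ι → ℕ) (n : ℕ) :
    Nat.card {k : Fin t // (s (e.symm k) : ℝ) = n} = Nat.card {i : ι // s i = n} :=
  Nat.card_congr <| (e.symm.subtypeEquiv fun _ => Iff.rfl).trans
    (Equiv.subtypeEquivRight fun _ => Nat.cast_inj)

namespace GridBlocks

variable {β : Type*} {D : ℕ} (lo num : β → Fin D → ℕ) (g : β → ℕ)

abbrev Cell : Type _ := Σ b, ∀ d, Fin (num b d)

def corner (j : Cell num) (d : Fin D) : ℕ := lo j.1 d + g j.1 * j.2 d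

lemma corner_add_le (j : Cell num) (d : Fin D) :
    corner lo num g j d + g j.1 ≤ lo j.1 d + g j.1 * num j.1 d := by
  have := Nat.mul_le_mul_left (g j.1) (j.2 d).isLt
  rw [Nat.mul_succ] at this
  rw [corner]
  omega

lemma lo_le_corner (j : Cell num) (d : Fin D) : lo j.1 d ≤ corner lo num g j d :=
  Nat.le_add_right _ _

lemma exists_separated_of_fst_eq {b : β} {k k' : ∀ d, Fin (num b d)} (hne : k ≠ k') :
    ∃ d, corner lo num g ⟨b, k⟩ d + g b ≤ corner lo num g ⟨b, k'⟩ d ∨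
      corner lo num g ⟨b, k'⟩ d + g b ≤ corner lo num g ⟨b, k⟩ d := by
  obtain ⟨d, hd⟩ := Function.ne_iff.1 hne
  refine ⟨d, ?_⟩
  simp only [corner]
  rcases Fin.lt_or_lt_of_ne hd with h | h
  · left; nlinarith [Nat.mul_le_mul_left (g b) (Nat.succ_le_of_lt h)]
  · right; nlinarith [Nat.mul_le_mul_left (g b) (Nat.succ_le_of_lt h)]

lemma exists_separated
    (hblocks : ∀ b b', b ≠ b' → ∃ d,
      lo b d + g b * num b d ≤ lo b' d ∨ lo b' d + g b' * num b' d ≤ lo b d)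
    (j j' : Cell num) (hne : j ≠ j') :
    ∃ d, corner lo num g j d + g j.1 ≤ corner lo num g j' d ∨
      corner lo num g j' d + g j'.1 ≤ corner lo num g j d := by
  obtain ⟨b, k⟩ := j
  obtain ⟨b', k'⟩ := j'
  by_cases hb : b = b'
  · subst hb
    exact exists_separated_of_fst_eq lo num g fun h => hne (h ▸ rfl)
  obtain ⟨d, hd⟩ := hblocks b b' hb
  have := corner_add_le lo num g ⟨b, k⟩ d
  have := corner_add_le lo num g ⟨b', k'⟩ d
  have := lo_le_corner lo num g ⟨b, k⟩ d
  have := lo_le_corner lo num g ⟨b', k'⟩ d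
  dsimp only at *
  exact ⟨d, by omega⟩

lemma exists_cell_of_mem_block {b : β} (hg : 0 < g b) {v : Fin D → ℕ}
    (hv : ∀ d, lo b d ≤ v d ∧ v d < lo b d + g b * num b d) :
    ∃ j : Cell num, ∀ d, corner lo num g j d ≤ v d ∧ v d < corner lo num g j d + g j.1 := by
  refine ⟨⟨b, fun d => ⟨(v d - lo b d) / g b, ?_⟩⟩, fun d => ⟨?_, ?_⟩⟩
  · exact (Nat.div_lt_iff_lt_mul hg).2 (by have := hv d; rw [mul_comm]; omega)
  · have := Nat.mul_div_le (v d - lo b d) (g b); have := hv d; simp only [corner]; omega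
  · have := Nat.lt_mul_div_succ (v d - lo b d) hg
    rw [Nat.mul_succ] at this
    have := hv d
    simp only [corner]
    omega

variable [Fintype β]

lemma card_cell : Fintype.card (Cell num) = ∑ b, ∏ d, num b d := by
  simp only [Fintype.card_sigma, Fintype.card_pi, Fintype.card_fin]

lemma natCard_cell_side_eq (n : ℕ) :
    Nat.card {j : Cell num // g j.1 = n} = ∑ b with g b = n, ∏ d, num b d := by
  classical
  rw [Nat.card_congr (Equiv.subtypeSigmaEquiv (fun b => ∀ d, Fin (num b d)) (g · = n)),
    Nat.card_eq_fintype_card, Fintype.card_sigma, ← Finset.sum_subtype_eq_sum_filter]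
  simp only [Fintype.card_pi, Fintype.card_fin, Finset.subtype_univ]

end GridBlocks

namespace NineTesseract

open GridBlocks

/- Each block is a grid of `num b d` cubes of side `side b` per axis, starting at `lo b`.
Blocks 0–2: 3-cubes filling `[0,9]^4 \ [0,9]×[0,6]^3`; block 3: the 5-cube, blocks 4–6: unit
cubes filling the rest of `[0,5]×[0,6]^3`; block 7: the 4-cube, blocks 8–10: 2-cubes filling
the rest of `[5,9]×[0,6]^3`. -/
def lo : Fin 11 → Fin 4 → ℕ :=
  ![![0,6,0,0], ![0,0,6,0], ![0,0,0,6], ![0,0,0,0], ![0,5,0,0], ![0,0,5,0],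
    ![0,0,0,5], ![5,0,0,0], ![5,4,0,0], ![5,0,4,0], ![5,0,0,4]]

def num : Fin 11 → Fin 4 → ℕ :=
  ![![3,1,3,3], ![3,2,1,3], ![3,2,2,1], ![1,1,1,1], ![5,1,6,6], ![5,5,1,6],
    ![5,5,5,1], ![1,1,1,1], ![2,1,3,3], ![2,2,1,3], ![2,2,2,1]]

def side : Fin 11 → ℕ := ![3,3,3,5,1,1,1,4,2,2,2]

def blockOf (v : Fin 4 → ℕ) : Fin 11 :=
  if 6 ≤ v 1 then 0 else if 6 ≤ v 2 then 1 else if 6 ≤ v 3 then 2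
  else if v 0 < 5 then
    if 5 ≤ v 1 then 4 else if 5 ≤ v 2 then 5 else if 5 ≤ v 3 then 6 else 3
  else
    if 4 ≤ v 1 then 8 else if 4 ≤ v 2 then 9 else if 4 ≤ v 3 then 10 else 7

lemma mem_blockOf (v : Fin 4 → ℕ) (hv : ∀ d, v d < 9) (d : Fin 4) :
    lo (blockOf v) d ≤ v d ∧ v d < lo (blockOf v) d + side (blockOf v) * num (blockOf v) d := by
  have := hv 0; have := hv 1; have := hv 2; have := hv 3
  unfold blockOf
  split_ifs <;> fin_cases d <;>
    simp only [lo, num, side, Fin.isValue, Fin.mk_one, Fin.zero_eta, Fin.reduceFinMk,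
      Matrix.cons_val', Matrix.cons_val, Matrix.cons_val_one, Matrix.cons_val_zero,
      Matrix.cons_val_fin_one] <;>
    omega

lemma blocks_separated : ∀ b b' : Fin 11, b ≠ b' → ∃ d,
    lo b d + side b * num b d ≤ lo b' d ∨ lo b' d + side b' * num b' d ≤ lo b d := by
  decide

lemma side_pos : ∀ b, 0 < side b := by decide

lemma block_le_nine : ∀ b d, lo b d + side b * num b d ≤ 9 := by decide

def cellEquiv : Cell num ≃ Fin 552 :=
  Fintype.equivFinOfCardEq <| (card_cell num).trans (by decide)

lemma isTiling :
    IsTiling 4 552 9 (fun k d => corner lo num side (cellEquiv.symm k) d)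
      (fun k => side (cellEquiv.symm k).1) := by
  have := isTiling_of_nat (L := 9) cellEquiv _ _ (by norm_num) (fun j => side_pos j.1)
    (exists_separated lo num side blocks_separated)
    (fun j d => (corner_add_le lo num side j d).trans (block_le_nine _ _))
    (fun v hv => exists_cell_of_mem_block lo num side (side_pos _) (mem_blockOf v hv))
  simpa using this

lemma natCard_side_eq (n : ℕ) (r : ℝ) (hr : (n : ℝ) = r) :
    Nat.card {k : Fin 552 // (side (cellEquiv.symm k).1 : ℝ) = r} =
      ∑ b with side b = n, ∏ d, num b d := by
  subst hr
  exact (natCard_cast_eq cellEquiv (fun j => side j.1) n).trans (natCard_cell_side_eq num side n)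

end NineTesseract

theorem stmt15 :
    (9 ^ 4 = 5 ^ 4 + 4 ^ 4 + 57 * 3 ^ 4 + 38 * 2 ^ 4 + 455) ∧
    ∃ (c : Fin 552 → Fin 4 → ℝ) (s : Fin 552 → ℝ), IsTiling 4 552 9 c s ∧
      Nat.card {i : Fin 552 // s i = 5} = 1 ∧
      Nat.card {i : Fin 552 // s i = 4} = 1 ∧
      Nat.card {i : Fin 552 // s i = 3} = 57 ∧
      Nat.card {i : Fin 552 // s i = 2} = 38 ∧
      Nat.card {i : Fin 552 // s i = 1} = 455 := by
  open NineTesseract in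
  refine ⟨by norm_num, _, _, isTiling, ?_, ?_, ?_, ?_, ?_⟩
  · exact (natCard_side_eq 5 5 (by norm_num)).trans (by decide)
  · exact (natCard_side_eq 4 4 (by norm_num)).trans (by decide)
  · exact (natCard_side_eq 3 3 (by norm_num)).trans (by decide)
  · exact (natCard_side_eq 2 2 (by norm_num)).trans (by decide)
  · exact (natCard_side_eq 1 1 (by norm_num)).trans (by decide)
end
end

section
/- The integers 1, 20, 38, 39, 49, 51, 54, 61 are 3-admissible, and if t is 3-admissible then so is t + 7; consequently every integer t ≥ 48 is 3-admissible. -/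
noncomputable section

lemma mem_cube {D t : ℕ} {c : Fin t → Fin D → ℝ} {s : Fin t → ℝ} {i : Fin t}
    {x : Fin D → ℝ} :
    x ∈ Cube c s i ↔ ∀ d, c i d ≤ x d ∧ x d ≤ c i d + s i := by
  simp only [Cube, Set.mem_Icc, Pi.le_def]
  exact ⟨fun ⟨h1, h2⟩ d => ⟨h1 d, h2 d⟩, fun h => ⟨fun d => (h d).1, fun d => (h d).2⟩⟩

lemma mem_interior_cube {D t : ℕ} {c : Fin t → Fin D → ℝ} {s : Fin t → ℝ} {i : Fin t}
    {x : Fin D → ℝ} :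
    x ∈ interior (Cube c s i) ↔ ∀ d, c i d < x d ∧ x d < c i d + s i := by
  have : Cube c s i = Set.pi Set.univ (fun d => Set.Icc (c i d) (c i d + s i)) := by
    rw [Set.pi_univ_Icc]; rfl
  rw [this, interior_pi_set Set.finite_univ]
  simp [Set.mem_univ_pi, interior_Icc, Set.mem_Ioo]

lemma mem_Icc01 {D : ℕ} {x : Fin D → ℝ} :
    x ∈ Set.Icc (0 : Fin D → ℝ) (fun _ => 1) ↔ ∀ d, 0 ≤ x d ∧ x d ≤ 1 := by
  simp only [Set.mem_Icc, Pi.le_def]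
  exact ⟨fun ⟨h1, h2⟩ d => ⟨h1 d, h2 d⟩, fun h => ⟨fun d => (h d).1, fun d => (h d).2⟩⟩

lemma admissible_pos {D t : ℕ} (h : Admissible D t) : 0 < t := by
  rcases h with ⟨c, s, _, _, hun⟩
  rcases Nat.eq_zero_or_pos t with rfl | h; swap; · exact h
  exfalso
  have h0 : (0 : Fin D → ℝ) ∈ Set.Icc (0 : Fin D → ℝ) (fun _ => 1) := by
    rw [mem_Icc01]; intro d; norm_num
  rw [← hun] at h0
  simp at h0

lemma grid_admissible {t N : ℕ} (hN : 0 < N) (c : Fin t → Fin 3 → ℕ) (s : Fin t → ℕ)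
    (hs : ∀ i, 0 < s i) (hb : ∀ i d, c i d + s i ≤ N)
    (hdisj : ∀ i j, i < j → ∃ d, c i d + s i ≤ c j d ∨ c j d + s j ≤ c i d)
    (hex : ∀ p : Fin 3 → ℕ, (∀ d, p d < N) → ∃ i, ∀ d, c i d ≤ p d ∧ p d < c i d + s i) :
    Admissible 3 t := by
  have hNR : (0 : ℝ) < N := by exact_mod_cast hN
  refine ⟨fun i d => (c i d : ℝ) / N, fun i => (s i : ℝ) / N, ?_, ?_, ?_⟩
  · intro i
    have : (0 : ℝ) < s i := by exact_mod_cast hs i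
    positivity
  · -- disjointness
    intro i j hij
    -- suppose common interior point
    rw [Set.disjoint_left]
    intro x hxi hxj
    rw [mem_interior_cube] at hxi hxj
    -- the cell q d = ⌈N x d⌉₊ - 1 lies in both integer boxes
    set q : Fin 3 → ℕ := fun d => ⌈(N : ℝ) * x d⌉₊ - 1 with hq
    have key : ∀ (k : Fin t), (∀ d, (c k d : ℝ) / N < x d ∧ x d < (c k d : ℝ) / N + (s k : ℝ) / N) →
        ∀ d, c k d ≤ q d ∧ q d < c k d + s k := by
      intro k hk d
      obtain ⟨h1, h2⟩ := hk d
      have hl : (c k d : ℝ) < N * x d := by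
        rw [div_lt_iff₀ hNR] at h1; linarith [h1]
      have hu : (N : ℝ) * x d < c k d + s k := by
        rw [← add_div, lt_div_iff₀ hNR] at h2
        calc (N : ℝ) * x d = x d * N := by ring
        _ < _ := h2
        _ = _ := by push_cast; ring
      have hceil_lb : c k d < ⌈(N : ℝ) * x d⌉₊ := by
        rw [Nat.lt_ceil]; exact hl
      have hceil_ub : ⌈(N : ℝ) * x d⌉₊ ≤ c k d + s k := by
        rw [Nat.ceil_le]; push_cast; linarith
      have hqd : q d = ⌈(N : ℝ) * x d⌉₊ - 1 := rfl
      omega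
    have hi := key i hxi
    have hj := key j hxj
    rcases lt_trichotomy i j with h | h | h
    · obtain ⟨d, hd⟩ := hdisj i j h
      rcases hd with hd | hd <;>
      · have := (hi d).1; have := (hi d).2; have := (hj d).1; have := (hj d).2; omega
    · exact hij h
    · obtain ⟨d, hd⟩ := hdisj j i h
      rcases hd with hd | hd <;>
      · have := (hi d).1; have := (hi d).2; have := (hj d).1; have := (hj d).2; omega
  · -- union
    ext x
    simp only [Set.mem_iUnion]
    rw [mem_Icc01]
    constructor
    · rintro ⟨i, hx⟩
      rw [mem_cube] at hx
      intro d
      obtain ⟨h1, h2⟩ := hx d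
      have hcb := hb i d
      constructor
      · have : (0 : ℝ) ≤ (c i d : ℝ) / N := by positivity
        linarith
      · have : (c i d : ℝ) / N + (s i : ℝ) / N ≤ 1 := by
          rw [← add_div, div_le_one hNR]
          exact_mod_cast hcb
        linarith
    · intro hx
      set p : Fin 3 → ℕ := fun d => min ⌊(N : ℝ) * x d⌋₊ (N - 1) with hp
      have hpN : ∀ d, p d < N := by intro d; simp only [hp]; omega
      obtain ⟨i, hi⟩ := hex p hpN
      refine ⟨i, ?_⟩
      rw [mem_cube]
      intro d
      obtain ⟨h0d, h1d⟩ := hx d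
      obtain ⟨hc1, hc2⟩ := hi d
      have hNx0 : (0 : ℝ) ≤ N * x d := by positivity
      have hfl : (p d : ℝ) ≤ N * x d := by
        have h1 : (⌊(N : ℝ) * x d⌋₊ : ℝ) ≤ N * x d := Nat.floor_le hNx0
        have h2 : p d ≤ ⌊(N : ℝ) * x d⌋₊ := by simp [hp]
        have : (p d : ℝ) ≤ (⌊(N : ℝ) * x d⌋₊ : ℝ) := by exact_mod_cast h2
        linarith
      have hfu : (N : ℝ) * x d ≤ p d + 1 := by
        rcases le_or_gt ⌊(N : ℝ) * x d⌋₊ (N - 1) with h | h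
        · have hpd : p d = ⌊(N : ℝ) * x d⌋₊ := by simp [hp]; omega
          rw [hpd]
          exact le_of_lt (Nat.lt_floor_add_one _)
        · have hpd : p d = N - 1 := by simp [hp]; omega
          have : (N : ℝ) * x d ≤ N := by nlinarith
          rw [hpd]
          have : ((N - 1 : ℕ) : ℝ) + 1 = N := by
            have : (1 : ℕ) ≤ N := hN
            push_cast [Nat.cast_sub this]
            ring
          linarith
      constructor
      · rw [div_le_iff₀ hNR]
        have : (c i d : ℝ) ≤ p d := by exact_mod_cast hc1
        calc (c i d : ℝ) ≤ p d := this
        _ ≤ N * x d := hfl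
        _ = x d * N := by ring
      · rw [← add_div, le_div_iff₀ hNR]
        have : (p d : ℝ) + 1 ≤ (c i d : ℝ) + s i := by
          have : p d + 1 ≤ c i d + s i := hc2
          exact_mod_cast this
        calc x d * N = N * x d := by ring
        _ ≤ (p d : ℝ) + 1 := hfu
        _ ≤ _ := this

def SideOK (N : ℕ) (q : ℕ × ℕ × ℕ × ℕ) : Prop :=
  0 < q.2.2.2 ∧ q.1 + q.2.2.2 ≤ N ∧ q.2.1 + q.2.2.2 ≤ N ∧ q.2.2.1 + q.2.2.2 ≤ N

def CubeSep (q r : ℕ × ℕ × ℕ × ℕ) : Prop :=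
  q.1 + q.2.2.2 ≤ r.1 ∨ r.1 + r.2.2.2 ≤ q.1 ∨ q.2.1 + q.2.2.2 ≤ r.2.1 ∨
  r.2.1 + r.2.2.2 ≤ q.2.1 ∨ q.2.2.1 + q.2.2.2 ≤ r.2.2.1 ∨ r.2.2.1 + r.2.2.2 ≤ q.2.2.1

def Covers (q : ℕ × ℕ × ℕ × ℕ) (x y z : ℕ) : Prop :=
  q.1 ≤ x ∧ x < q.1 + q.2.2.2 ∧ q.2.1 ≤ y ∧ y < q.2.1 + q.2.2.2 ∧
  q.2.2.1 ≤ z ∧ z < q.2.2.1 + q.2.2.2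

instance (N q) : Decidable (SideOK N q) := by unfold SideOK; infer_instance
instance (q r) : Decidable (CubeSep q r) := by unfold CubeSep; infer_instance
instance (q x y z) : Decidable (Covers q x y z) := by unfold Covers; infer_instance

lemma list_admissible (N : ℕ) (L : List (ℕ × ℕ × ℕ × ℕ)) (hN : 0 < N)
    (h1 : ∀ q ∈ L, SideOK N q)
    (h2 : L.Pairwise CubeSep)
    (h3 : ∀ x y z : Fin N, ∃ q ∈ L, Covers q x y z) :
    Admissible 3 L.length := by
  set t := L.length
  set c : Fin t → Fin 3 → ℕ := fun i => ![(L.get i).1, (L.get i).2.1, (L.get i).2.2.1] with hc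
  set s : Fin t → ℕ := fun i => (L.get i).2.2.2 with hsdef
  have hmem : ∀ i : Fin t, L.get i ∈ L := fun i => L.get_mem i
  apply grid_admissible hN c s
  · intro i; exact (h1 _ (hmem i)).1
  · intro i d
    obtain ⟨_, hx, hy, hz⟩ := h1 _ (hmem i)
    fin_cases d <;> simpa [hc, hsdef] using by first | exact hx | exact hy | exact hz
  · intro i j hij
    have hsep : CubeSep (L.get i) (L.get j) :=
      (List.pairwise_iff_get.mp h2) i j hij
    rcases hsep with h | h | h | h | h | h
    · exact ⟨0, Or.inl (by simpa [hc, hsdef] using h)⟩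
    · exact ⟨0, Or.inr (by simpa [hc, hsdef] using h)⟩
    · exact ⟨1, Or.inl (by simpa [hc, hsdef] using h)⟩
    · exact ⟨1, Or.inr (by simpa [hc, hsdef] using h)⟩
    · exact ⟨2, Or.inl (by simpa [hc, hsdef] using h)⟩
    · exact ⟨2, Or.inr (by simpa [hc, hsdef] using h)⟩
  · intro p hp
    obtain ⟨q, hqL, hcov⟩ := h3 ⟨p 0, hp 0⟩ ⟨p 1, hp 1⟩ ⟨p 2, hp 2⟩
    obtain ⟨n, hn, rfl⟩ := List.mem_iff_get.mp hqL
    refine ⟨n, ?_⟩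
    obtain ⟨a1, a2, a3, a4, a5, a6⟩ := hcov
    intro d
    fin_cases d <;> simp_all [hc, hsdef]

lemma compose {D a b : ℕ} (ha : Admissible D (a + 1)) (hb : Admissible D (b + 1)) :
    Admissible D (a + (b + 1)) := by
  obtain ⟨c, s, hs, hdj, hun⟩ := ha
  obtain ⟨c', s', hs', hdj', hun'⟩ := hb
  have hs0 : (0 : ℝ) < s 0 := hs 0
  set y : (Fin D → ℝ) → (Fin D → ℝ) := fun x d => (x d - c 0 d) / s 0 with hy
  set C : Fin (a + (b + 1)) → Fin D → ℝ :=
    fun k d => if h : (k : ℕ) < a then c (⟨k, h⟩ : Fin a).succ d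
      else c 0 d + s 0 * c' ⟨(k : ℕ) - a, by omega⟩ d with hC
  set S : Fin (a + (b + 1)) → ℝ :=
    fun k => if h : (k : ℕ) < a then s (⟨k, h⟩ : Fin a).succ
      else s 0 * s' ⟨(k : ℕ) - a, by omega⟩ with hS
  have split : ∀ k : Fin (a + (b + 1)),
      (∃ (i : Fin a) (hk : (k : ℕ) < a), i = ⟨k, hk⟩ ∧
         C k = c i.succ ∧ S k = s i.succ) ∨
      (∃ j : Fin (b + 1), (¬ (k : ℕ) < a) ∧ j = ⟨(k : ℕ) - a, by omega⟩ ∧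
         (∀ d, C k d = c 0 d + s 0 * c' j d) ∧ S k = s 0 * s' j) := by
    intro k
    rcases lt_or_ge (k : ℕ) a with h | h
    · exact Or.inl ⟨⟨k, h⟩, h, rfl, by simp [hC, h], by simp [hS, h]⟩
    · have h' : ¬ (k : ℕ) < a := by omega
      exact Or.inr ⟨⟨(k : ℕ) - a, by omega⟩, h', rfl, fun d => by simp [hC, h'], by simp [hS, h']⟩
  have hle : ∀ (x : Fin D → ℝ) (d : Fin D) (r : ℝ),
      (r ≤ y x d ↔ c 0 d + s 0 * r ≤ x d) := by
    intro x d r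
    rw [hy]; simp only
    rw [le_div_iff₀ hs0]
    constructor <;> intro h <;> nlinarith
  have hle' : ∀ (x : Fin D → ℝ) (d : Fin D) (r : ℝ),
      (y x d ≤ r ↔ x d ≤ c 0 d + s 0 * r) := by
    intro x d r
    rw [hy]; simp only
    rw [div_le_iff₀ hs0]
    constructor <;> intro h <;> nlinarith
  have hlt : ∀ (x : Fin D → ℝ) (d : Fin D) (r : ℝ),
      (r < y x d ↔ c 0 d + s 0 * r < x d) := by
    intro x d r
    rw [hy]; simp only
    rw [lt_div_iff₀ hs0]
    constructor <;> intro h <;> nlinarith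
  have hlt' : ∀ (x : Fin D → ℝ) (d : Fin D) (r : ℝ),
      (y x d < r ↔ x d < c 0 d + s 0 * r) := by
    intro x d r
    rw [hy]; simp only
    rw [div_lt_iff₀ hs0]
    constructor <;> intro h <;> nlinarith
  -- membership transfer for subdivided cubes
  have memsub : ∀ (k : Fin (a + (b+1))) (j : Fin (b+1)),
      (∀ d, C k d = c 0 d + s 0 * c' j d) → S k = s 0 * s' j →
      ∀ x, (x ∈ Cube C S k ↔ y x ∈ Cube c' s' j) := by
    intro k j hCk hSk x
    rw [mem_cube, mem_cube]
    apply forall_congr'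
    intro d
    rw [hCk d, hSk, hle x d (c' j d), hle' x d (c' j d + s' j)]
    constructor <;> rintro ⟨u, v⟩ <;> exact ⟨u, by nlinarith⟩
  have memsubi : ∀ (k : Fin (a + (b+1))) (j : Fin (b+1)),
      (∀ d, C k d = c 0 d + s 0 * c' j d) → S k = s 0 * s' j →
      ∀ x, (x ∈ interior (Cube C S k) ↔ y x ∈ interior (Cube c' s' j)) := by
    intro k j hCk hSk x
    rw [mem_interior_cube, mem_interior_cube]
    apply forall_congr'
    intro d
    rw [hCk d, hSk, hlt x d (c' j d), hlt' x d (c' j d + s' j)]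
    constructor <;> rintro ⟨u, v⟩ <;> exact ⟨u, by nlinarith⟩
  have memc0 : ∀ x : Fin D → ℝ,
      x ∈ Cube c s 0 ↔ y x ∈ Set.Icc (0 : Fin D → ℝ) (fun _ => 1) := by
    intro x
    rw [mem_cube, mem_Icc01]
    apply forall_congr'
    intro d
    rw [hle x d 0, hle' x d 1]
    constructor <;> rintro ⟨u, v⟩ <;> constructor <;> nlinarith
  have sub0 : ∀ (k : Fin (a + (b+1))) (j : Fin (b+1)),
      (∀ d, C k d = c 0 d + s 0 * c' j d) → S k = s 0 * s' j →
      Cube C S k ⊆ Cube c s 0 := by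
    intro k j hCk hSk x hx
    rw [memsub k j hCk hSk] at hx
    rw [memc0, ← hun']
    exact Set.mem_iUnion.mpr ⟨j, hx⟩
  refine ⟨C, S, ?_, ?_, ?_⟩
  · intro k
    rcases split k with ⟨i, hk, hi, hCk, hSk⟩ | ⟨j, hk, hj, hCk, hSk⟩
    · rw [hSk]; exact hs _
    · rw [hSk]; exact mul_pos hs0 (hs' j)
  · intro k l hkl
    rcases split k with ⟨i, hik, hi, hCk, hSk⟩ | ⟨j, hjk, hj, hCk, hSk⟩ <;>
      rcases split l with ⟨i', hil, hi', hCl, hSl⟩ | ⟨j', hjl, hj', hCl, hSl⟩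
    · have e1 : Cube C S k = Cube c s i.succ := by rw [Cube, Cube, hCk, hSk]
      have e2 : Cube C S l = Cube c s i'.succ := by rw [Cube, Cube, hCl, hSl]
      rw [e1, e2]
      apply hdj
      simp only [ne_eq, Fin.succ_inj]
      intro h
      apply hkl
      have : (k : ℕ) = (l : ℕ) := by
        have := congrArg Fin.val h
        rw [hi, hi'] at this
        simpa using this
      exact Fin.ext this
    · have e1 : Cube C S k = Cube c s i.succ := by rw [Cube, Cube, hCk, hSk]
      rw [e1]
      have h2 : interior (Cube C S l) ⊆ interior (Cube c s 0) :=
        interior_mono (sub0 l j' hCl hSl)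
      exact Disjoint.mono_right h2 (hdj i.succ 0 (Fin.succ_ne_zero i))
    · have e2 : Cube C S l = Cube c s i'.succ := by rw [Cube, Cube, hCl, hSl]
      rw [e2]
      have h2 : interior (Cube C S k) ⊆ interior (Cube c s 0) :=
        interior_mono (sub0 k j hCk hSk)
      exact Disjoint.mono_left h2 (hdj 0 i'.succ (Fin.succ_ne_zero i').symm)
    · have hjj : j ≠ j' := by
        intro h
        apply hkl
        have : (k : ℕ) = (l : ℕ) := by
          have := congrArg Fin.val h
          rw [hj, hj'] at this
          simp at this
          omega
        exact Fin.ext this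
      rw [Set.disjoint_left]
      intro x hx1 hx2
      rw [memsubi k j hCk hSk] at hx1
      rw [memsubi l j' hCl hSl] at hx2
      exact Set.disjoint_left.mp (hdj' j j' hjj) hx1 hx2
  · ext x
    rw [Set.mem_iUnion]
    constructor
    · rintro ⟨k, hk⟩
      rcases split k with ⟨i, hik, hi, hCk, hSk⟩ | ⟨j, hjk, hj, hCk, hSk⟩
      · have e1 : Cube C S k = Cube c s i.succ := by rw [Cube, Cube, hCk, hSk]
        rw [e1] at hk
        rw [← hun]
        exact Set.mem_iUnion.mpr ⟨i.succ, hk⟩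
      · have := sub0 k j hCk hSk hk
        rw [← hun]
        exact Set.mem_iUnion.mpr ⟨0, this⟩
    · intro hx
      rw [← hun, Set.mem_iUnion] at hx
      obtain ⟨i, hi⟩ := hx
      rcases Fin.eq_zero_or_eq_succ i with rfl | ⟨i', rfl⟩
      · rw [memc0, ← hun', Set.mem_iUnion] at hi
        obtain ⟨j, hj⟩ := hi
        set k : Fin (a + (b+1)) := ⟨a + (j : ℕ), by omega⟩ with hk
        have hkv : (k : ℕ) = a + (j : ℕ) := rfl
        rcases split k with ⟨i, hik, _, _, _⟩ | ⟨j'', hnk, hj'', hCk, hSk⟩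
        · omega
        · have hjj : j'' = j := by
            apply Fin.ext
            rw [hj'']
            simp only []
            omega
          rw [hjj] at hCk hSk
          exact ⟨k, (memsub k j hCk hSk x).mpr hj⟩
      · set k : Fin (a + (b+1)) := ⟨(i' : ℕ), by omega⟩ with hk
        have hkv : (k : ℕ) = (i' : ℕ) := rfl
        rcases split k with ⟨i'', hik, hi'', hCk, hSk⟩ | ⟨j'', hnk, _, _, _⟩
        · have hii : i'' = i' := by
            apply Fin.ext
            have := congrArg Fin.val hi''
            simp only [] at this
            omega
          rw [hii] at hCk hSk
          refine ⟨k, ?_⟩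
          have e1 : Cube C S k = Cube c s i'.succ := by rw [Cube, Cube, hCk, hSk]
          rw [e1]
          exact hi
        · exact absurd i'.isLt (by omega)

section Instances
def L8 : List (ℕ × ℕ × ℕ × ℕ) := [(0,0,0,1), (1,0,0,1), (0,1,0,1), (1,1,0,1), (0,0,1,1), (1,0,1,1), (0,1,1,1), (1,1,1,1)]
def L20 : List (ℕ × ℕ × ℕ × ℕ) := [(0,0,0,2), (2,0,0,1), (2,1,0,1), (0,2,0,1), (1,2,0,1), (2,2,0,1), (2,0,1,1), (2,1,1,1), (0,2,1,1), (1,2,1,1), (2,2,1,1), (0,0,2,1), (1,0,2,1), (2,0,2,1), (0,1,2,1), (1,1,2,1), (2,1,2,1), (0,2,2,1), (1,2,2,1), (2,2,2,1)]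
def L38 : List (ℕ × ℕ × ℕ × ℕ) := [(0,0,0,3), (3,0,0,1), (3,1,0,1), (3,2,0,1), (0,3,0,1), (1,3,0,1), (2,3,0,1), (3,3,0,1), (3,0,1,1), (3,1,1,1), (3,2,1,1), (0,3,1,1), (1,3,1,1), (2,3,1,1), (3,3,1,1), (3,0,2,1), (3,1,2,1), (3,2,2,1), (0,3,2,1), (1,3,2,1), (2,3,2,1), (3,3,2,1), (0,0,3,1), (1,0,3,1), (2,0,3,1), (3,0,3,1), (0,1,3,1), (1,1,3,1), (2,1,3,1), (3,1,3,1), (0,2,3,1), (1,2,3,1), (2,2,3,1), (3,2,3,1), (0,3,3,1), (1,3,3,1), (2,3,3,1), (3,3,3,1)]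
def L39 : List (ℕ × ℕ × ℕ × ℕ) := [(0,0,0,3), (3,0,0,3), (0,3,0,3), (3,3,0,3), (0,0,3,3), (3,0,3,3), (0,3,3,2), (2,3,3,2), (4,3,3,2), (0,5,3,1), (1,5,3,1), (2,5,3,1), (3,5,3,1), (4,5,3,1), (5,5,3,1), (0,5,4,1), (1,5,4,1), (2,5,4,1), (3,5,4,1), (4,5,4,1), (5,5,4,1), (0,3,5,1), (1,3,5,1), (2,3,5,1), (3,3,5,1), (4,3,5,1), (5,3,5,1), (0,4,5,1), (1,4,5,1), (2,4,5,1), (3,4,5,1), (4,4,5,1), (5,4,5,1), (0,5,5,1), (1,5,5,1), (2,5,5,1), (3,5,5,1), (4,5,5,1), (5,5,5,1)]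
def L49 : List (ℕ × ℕ × ℕ × ℕ) := [(0,0,0,3), (3,0,0,3), (0,3,0,3), (3,3,0,3), (0,0,3,2), (2,0,3,2), (4,0,3,2), (0,2,3,2), (2,2,3,2), (4,2,3,2), (0,4,3,2), (2,4,3,2), (4,4,3,2), (0,0,5,1), (1,0,5,1), (2,0,5,1), (3,0,5,1), (4,0,5,1), (5,0,5,1), (0,1,5,1), (1,1,5,1), (2,1,5,1), (3,1,5,1), (4,1,5,1), (5,1,5,1), (0,2,5,1), (1,2,5,1), (2,2,5,1), (3,2,5,1), (4,2,5,1), (5,2,5,1), (0,3,5,1), (1,3,5,1), (2,3,5,1), (3,3,5,1), (4,3,5,1), (5,3,5,1), (0,4,5,1), (1,4,5,1), (2,4,5,1), (3,4,5,1), (4,4,5,1), (5,4,5,1), (0,5,5,1), (1,5,5,1), (2,5,5,1), (3,5,5,1), (4,5,5,1), (5,5,5,1)]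
def L51 : List (ℕ × ℕ × ℕ × ℕ) := [(0,0,0,3), (3,0,0,3), (0,3,0,3), (3,3,0,3), (0,0,3,3), (3,0,3,2), (3,2,3,2), (0,3,3,2), (2,4,3,2), (4,4,3,2), (5,0,3,1), (5,1,3,1), (5,2,3,1), (2,3,3,1), (5,3,3,1), (0,5,3,1), (1,5,3,1), (5,0,4,1), (5,1,4,1), (5,2,4,1), (2,3,4,1), (5,3,4,1), (0,5,4,1), (1,5,4,1), (3,0,5,1), (4,0,5,1), (5,0,5,1), (3,1,5,1), (4,1,5,1), (5,1,5,1), (3,2,5,1), (4,2,5,1), (5,2,5,1), (0,3,5,1), (1,3,5,1), (2,3,5,1), (3,3,5,1), (4,3,5,1), (5,3,5,1), (0,4,5,1), (1,4,5,1), (2,4,5,1), (3,4,5,1), (4,4,5,1), (5,4,5,1), (0,5,5,1), (1,5,5,1), (2,5,5,1), (3,5,5,1), (4,5,5,1), (5,5,5,1)]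
def L54 : List (ℕ × ℕ × ℕ × ℕ) := [(0,0,0,4), (4,0,0,4), (0,4,0,4), (4,4,0,4), (0,0,4,4), (4,0,4,4), (0,4,4,3), (3,4,4,3), (6,4,4,2), (6,6,4,2), (6,4,6,2), (6,6,6,2), (0,7,4,1), (1,7,4,1), (2,7,4,1), (3,7,4,1), (4,7,4,1), (5,7,4,1), (0,7,5,1), (1,7,5,1), (2,7,5,1), (3,7,5,1), (4,7,5,1), (5,7,5,1), (0,7,6,1), (1,7,6,1), (2,7,6,1), (3,7,6,1), (4,7,6,1), (5,7,6,1), (0,4,7,1), (1,4,7,1), (2,4,7,1), (3,4,7,1), (4,4,7,1), (5,4,7,1), (0,5,7,1), (1,5,7,1), (2,5,7,1), (3,5,7,1), (4,5,7,1), (5,5,7,1), (0,6,7,1), (1,6,7,1), (2,6,7,1), (3,6,7,1), (4,6,7,1), (5,6,7,1), (0,7,7,1), (1,7,7,1), (2,7,7,1), (3,7,7,1), (4,7,7,1), (5,7,7,1)]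

lemma adm8 : Admissible 3 8 := by
  have h := list_admissible 2 L8 (by norm_num) (by decide) (by decide) (by decide)
  exact h

lemma adm20 : Admissible 3 20 := by
  have h := list_admissible 3 L20 (by norm_num) (by decide) (by decide) (by decide)
  exact h

lemma adm38 : Admissible 3 38 := by
  have h := list_admissible 4 L38 (by norm_num) (by decide) (by decide) (by decide)
  exact h

lemma adm39 : Admissible 3 39 := by
  have h := list_admissible 6 L39 (by norm_num) (by decide) (by decide) (by decide)
  exact h

lemma adm49 : Admissible 3 49 := by
  have h := list_admissible 6 L49 (by norm_num) (by decide) (by decide) (by decide)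
  exact h

lemma adm51 : Admissible 3 51 := by
  have h := list_admissible 6 L51 (by norm_num) (by decide) (by decide) (by decide)
  exact h

lemma adm54 : Admissible 3 54 := by
  have h := list_admissible 8 L54 (by norm_num) (by decide) (by decide) (by decide)
  exact h

lemma adm1 : Admissible 3 1 := by
  have h := list_admissible 1 [((0:ℕ),(0:ℕ),(0:ℕ),(1:ℕ))] (by norm_num) (by decide) (by decide)
    (by decide)
  exact h

end Instances

lemma step_seven {t : ℕ} (h : Admissible 3 t) : Admissible 3 (t + 7) := by
  have hpos : 0 < t := admissible_pos h
  obtain ⟨a, rfl⟩ : ∃ a, t = a + 1 := ⟨t - 1, by omega⟩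
  have e : a + 1 + 7 = a + (7 + 1) := by omega
  rw [e]
  exact compose h adm8

lemma adm_ge48 : ∀ n : ℕ, Admissible 3 (48 + n) := by
  intro n
  induction n using Nat.strong_induction_on with
  | _ n ih =>
    rcases lt_or_ge n 7 with h | h
    · interval_cases n
      · have e : 48 + 0 = 20 + 7 + 7 + 7 + 7 := by norm_num
        rw [e]; exact step_seven (step_seven (step_seven (step_seven adm20)))
      · have e : 48 + 1 = 49 := by norm_num
        rw [e]; exact adm49
      · have e : 48 + 2 = 1 + 7 + 7 + 7 + 7 + 7 + 7 + 7 := by norm_num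
        rw [e]
        exact step_seven (step_seven (step_seven (step_seven (step_seven (step_seven
          (step_seven adm1))))))
      · have e : 48 + 3 = 51 := by norm_num
        rw [e]; exact adm51
      · have e : 48 + 4 = 38 + 7 + 7 := by norm_num
        rw [e]; exact step_seven (step_seven adm38)
      · have e : 48 + 5 = 39 + 7 + 7 := by norm_num
        rw [e]; exact step_seven (step_seven adm39)
      · have e : 48 + 6 = 54 := by norm_num
        rw [e]; exact adm54
    · have h7 := ih (n - 7) (by omega)
      have := step_seven h7
      have e : 48 + (n - 7) + 7 = 48 + n := by omega
      rwa [e] at this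

theorem stmt18 :
    (∀ t ∈ ({1, 20, 38, 39, 49, 51, 54, 61} : Set ℕ), Admissible 3 t) ∧
    (∀ t : ℕ, Admissible 3 t → Admissible 3 (t + 7)) ∧
    (∀ t : ℕ, 48 ≤ t → Admissible 3 t) := by
  refine ⟨?_, ?_, ?_⟩
  · intro t ht
    simp only [Set.mem_insert_iff, Set.mem_singleton_iff] at ht
    rcases ht with rfl | rfl | rfl | rfl | rfl | rfl | rfl | rfl
    · exact adm1
    · exact adm20
    · exact adm38
    · exact adm39
    · exact adm49
    · exact adm51
    · exact adm54
    · have e : 61 = 54 + 7 := by norm_num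
      rw [e]; exact step_seven adm54
  · exact fun t h => step_seven h
  · intro t ht
    have := adm_ge48 (t - 48)
    have e : 48 + (t - 48) = t := by omega
    rwa [e] at this
end
end
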